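/- arXiv:2110.14761 — 2 statements merged into one kernel-verified Lean document; each statement's English description precedes it below -/
import Mathlib

section
/- Let G be a graph (as a simple graph with the path metric) and suppose that for every pair of vertices x, y there is an associated connected subgraph g(x,y) containing x and y. If there exists M > 0 such that (1) whenever d(x,y) ≤ 1 the subgraph g(x,y) has diameter at most M, and (2) for all x,y,z the set g(x,y) is contained in the M-neighborhood of g(x,z) ∪ g(y,z), then G is δ-hyperbolic for a constant δ depending only on M. -/
/-!
Bisecting a discrete path of length `ℓ` from `x` to `y` and applying thinness at each midpoint
shows that `g x y` lies within `M (log₂ ℓ + 1)` of the path. From this, induction on `d(x, y)`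
shows that `g x y` lies within `50 M²` of every geodesic from `x` to `y`: if `w ∈ g x y` were at
distance `D > 50 M²` from the geodesic, cut it at the two points `D + 50 M² + 2M + 1` away from
the point nearest to `w`; thinness places `w` within `2M` of either a set `g` of a shorter
geodesic, which the induction hypothesis and the triangle inequality rule out, or of `g` of the
middle segment, at distance `O(M log D) < D`.

Hence `d(p, g x y)` agrees with the Gromov product `(x | y)_p` up to an additive constant: one
inequality is the fellow-travelling above, and for the other one walks through the connected set
`g x y` from the points near a geodesic `[x, p]` to those near `[y, p]`. Applying thinness to
`g a b` and measuring from `d` gives the four-point condition.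
-/

open SimpleGraph

namespace GuessingGeodesics

theorem cube_lt_two_pow {t : ℕ} (ht : 10 ≤ t) : t ^ 3 < 2 ^ t := by
  induction t, ht using Nat.le_induction with
  | base => norm_num
  | succ n hn ih =>
    have : 3 * n + 1 ≤ n ^ 2 := by nlinarith
    have : (n + 1) ^ 3 ≤ 2 * n ^ 3 := by nlinarith
    rw [pow_succ 2 n]
    omega

theorem mul_log_add_four_lt {M D : ℕ} (hD : 50 * M * M < D) :
    M * (Nat.log 2 (4 * (D + M)) + 4) < D := by
  set t := Nat.log 2 (4 * (D + M))
  have ht : 2 ^ t ≤ 4 * (D + M) := Nat.pow_log_le_self 2 (by omega)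
  by_contra! h
  rcases Nat.eq_zero_or_pos M with rfl | hM
  · omega
  have ht50 : 50 * M ≤ t + 3 := by nlinarith
  have hc := cube_lt_two_pow (t := t) (by omega)
  have : 50 * (4 * M * (t + 5)) ≤ 4 * (t + 3) * (t + 5) := by nlinarith
  have : 4 * (t + 3) * (t + 5) < 50 * t ^ 3 := by nlinarith
  nlinarith

variable {V : Type*} {G : SimpleGraph V}

def IsDiscretePath (G : SimpleGraph V) (c : ℕ → V) (L : ℕ) : Prop :=
  ∀ i < L, G.dist (c i) (c (i + 1)) ≤ 1

def IsGeodesicSeq (G : SimpleGraph V) (c : ℕ → V) (L : ℕ) : Prop :=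
  ∀ i j, i ≤ j → j ≤ L → G.dist (c i) (c j) = j - i

theorem IsDiscretePath.reverse {c : ℕ → V} {L : ℕ} (hc : IsDiscretePath G c L) :
    IsDiscretePath G (fun i => c (L - i)) L := fun i hi => by
  have h := hc (L - (i + 1)) (by omega)
  rwa [dist_comm, show L - (i + 1) + 1 = L - i by omega] at h

theorem IsDiscretePath.mono {c : ℕ → V} {L s : ℕ} (hc : IsDiscretePath G c L) (hs : s ≤ L) :
    IsDiscretePath G c s := fun i hi => hc i (hi.trans_le hs)

theorem IsDiscretePath.dist_le (hG : G.Connected) {c : ℕ → V} {L : ℕ}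
    (hc : IsDiscretePath G c L) {i j : ℕ} (hij : i ≤ j) (hjL : j ≤ L) :
    G.dist (c i) (c j) ≤ j - i := by
  induction j, hij using Nat.le_induction with
  | base => simp
  | succ j hij ih =>
    have := hG.dist_triangle (u := c i) (v := c j) (w := c (j + 1))
    have := hc j (by omega)
    omega

theorem IsGeodesicSeq.isDiscretePath {c : ℕ → V} {L : ℕ} (hc : IsGeodesicSeq G c L) :
    IsDiscretePath G c L := fun i hi => by
  rw [hc i (i + 1) (by omega) hi]
  omega

theorem IsGeodesicSeq.mono {c : ℕ → V} {L s : ℕ} (hc : IsGeodesicSeq G c L) (hs : s ≤ L) :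
    IsGeodesicSeq G c s := fun i j hij hj => hc i j hij (hj.trans hs)

theorem IsGeodesicSeq.reverse {c : ℕ → V} {L : ℕ} (hc : IsGeodesicSeq G c L) :
    IsGeodesicSeq G (fun i => c (L - i)) L := fun i j hij hj => by
  rw [dist_comm, hc (L - j) (L - i) (by omega) (by omega)]
  omega

theorem IsGeodesicSeq.shift {c : ℕ → V} {L a n : ℕ} (hc : IsGeodesicSeq G c L)
    (h : a + n ≤ L) :
    IsGeodesicSeq G (fun i => c (a + i)) n := fun i j hij hj => by
  rw [hc (a + i) (a + j) (by omega) (by omega)]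
  omega

theorem exists_isGeodesicSeq (hG : G.Connected) (x y : V) :
    ∃ c, c 0 = x ∧ c (G.dist x y) = y ∧ IsGeodesicSeq G c (G.dist x y) := by
  obtain ⟨p, hp⟩ := hG.exists_walk_length_eq_dist x y
  have hpath : IsDiscretePath G p.getVert p.length := fun i hi =>
    (dist_eq_one_iff_adj.mpr (p.adj_getVert_succ hi)).le
  refine ⟨p.getVert, p.getVert_zero, hp ▸ p.getVert_length, fun i j hij hj => ?_⟩
  rw [← hp] at hj
  have hxi := hpath.dist_le hG (Nat.zero_le i) (hij.trans hj)
  have hjy := hpath.dist_le hG hj le_rfl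
  have hij' := hpath.dist_le hG hij hj
  have := hG.dist_triangle (u := x) (v := p.getVert i) (w := p.getVert j)
  have := hG.dist_triangle (u := x) (v := p.getVert j) (w := y)
  simp only [Walk.getVert_zero, Walk.getVert_length] at *
  omega

theorem exists_dist_le_one_of_induce_connected {s : Set V} (hs : (G.induce s).Connected)
    {P Q : V → Prop} (hPQ : ∀ v ∈ s, P v ∨ Q v) {x y : V} (hx : x ∈ s) (hy : y ∈ s)
    (hPx : P x) (hQy : Q y) : ∃ v ∈ s, ∃ v', G.dist v v' ≤ 1 ∧ P v ∧ Q v' := by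
  by_cases hPy : P y
  · exact ⟨y, hy, y, by simp, hPy, hQy⟩
  obtain ⟨q⟩ := hs.preconnected ⟨x, hx⟩ ⟨y, hy⟩
  obtain ⟨d, -, hd₁, hd₂⟩ := q.exists_boundary_dart {v | P v.1} hPx hPy
  have hadj : G.Adj d.fst.1 d.snd.1 := d.adj
  exact ⟨d.fst.1, d.fst.2, d.snd.1, (dist_eq_one_iff_adj.mpr hadj).le, hd₁,
    (hPQ _ d.snd.2).resolve_left hd₂⟩

structure IsGuessingGeodesics (G : SimpleGraph V) (M : ℕ) (g : V → V → Set V) : Prop where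
  mem : ∀ x y, x ∈ g x y ∧ y ∈ g x y
  dist_le_of_dist_le_one :
    ∀ x y, G.dist x y ≤ 1 → ∀ a ∈ g x y, ∀ b ∈ g x y, G.dist a b ≤ M
  exists_near : ∀ x y z, ∀ w ∈ g x y, ∃ w' ∈ g x z ∪ g y z, G.dist w w' ≤ M

namespace IsGuessingGeodesics

variable {M : ℕ} {g : V → V → Set V}

theorem exists_dist_le_of_isDiscretePath (hg : IsGuessingGeodesics G M g) (hG : G.Connected)
    (k : ℕ) : ∀ c L, IsDiscretePath G c L → L ≤ 2 ^ k →
      ∀ w ∈ g (c 0) (c L), ∃ i ≤ L, G.dist w (c i) ≤ M * (k + 1) := by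
  induction k with
  | zero =>
    intro c L hc hL w hw
    have hends : G.dist (c 0) (c L) ≤ 1 := by
      rcases Nat.le_one_iff_eq_zero_or_eq_one.mp hL with rfl | rfl
      · simp
      · exact hc 0 one_pos
    exact ⟨0, Nat.zero_le L, by
      simpa using hg.dist_le_of_dist_le_one _ _ hends w hw _ (hg.mem _ _).1⟩
  | succ k ih =>
    intro c L hc hL w hw
    have hmul : M * (k + 1) ≤ M * (k + 1 + 1) := Nat.mul_le_mul_left M (by omega)
    rcases le_or_gt L (2 ^ k) with hsmall | hbig
    · obtain ⟨i, hi, hd⟩ := ih c L hc hsmall w hw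
      exact ⟨i, hi, hd.trans hmul⟩
    obtain ⟨w', hw', hww'⟩ := hg.exists_near _ _ (c (2 ^ k)) w hw
    rcases hw' with hw' | hw'
    · obtain ⟨i, hi, hd⟩ := ih c (2 ^ k) (hc.mono hbig.le) le_rfl w' hw'
      refine ⟨i, by omega, ?_⟩
      have := hG.dist_triangle (u := w) (v := w') (w := c i)
      rw [Nat.mul_succ]
      omega
    · have hw' : w' ∈ g (c (L - 0)) (c (L - (L - 2 ^ k))) := by
        rwa [Nat.sub_zero, Nat.sub_sub_self hbig.le]
      obtain ⟨i, hi, hd⟩ := ih (fun i => c (L - i)) (L - 2 ^ k)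
        (hc.reverse.mono (Nat.sub_le L _)) (by rw [pow_succ] at hL; omega) w' hw'
      refine ⟨L - i, by omega, ?_⟩
      have := hG.dist_triangle (u := w) (v := w') (w := c (L - i))
      rw [Nat.mul_succ]
      omega

theorem lt_dist_of_mem_initial (hg : IsGuessingGeodesics G M g) (hG : G.Connected) {L : ℕ}
    (IH : ∀ L' < L, ∀ c, IsGeodesicSeq G c L' →
      ∀ w ∈ g (c 0) (c L'), ∃ i ≤ L', G.dist w (c i) ≤ 50 * M * M)
    {c : ℕ → V} (hc : IsGeodesicSeq G c L) {w w' : V}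
    (hfar : ∀ i ≤ L, 50 * M * M < G.dist w (c i)) {i j : ℕ} (hij : i ≤ j) (hjL : j ≤ L)
    (hi : i = 0 ∨ G.dist w (c j) + 50 * M * M + 2 * M < j - i) (hw' : w' ∈ g (c 0) (c i)) :
    2 * M < G.dist w w' := by
  rcases hi with rfl | hgap
  · have h0 := hg.dist_le_of_dist_le_one _ _ (by simp) w' hw' _ (hg.mem _ _).1
    have := hG.dist_triangle (u := w) (v := w') (w := c 0)
    have := hfar 0 (Nat.zero_le L)
    have : 3 * M ≤ 50 * M * M := by rcases M with _ | M <;> nlinarith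
    omega
  · obtain ⟨i', hi', hd⟩ := IH i (by omega) c (hc.mono (by omega)) w' hw'
    have := hc i' j (by omega) hjL
    have := hG.dist_triangle (u := c i') (v := w') (w := c j)
    have := hG.dist_triangle (u := w') (v := w) (w := c j)
    rw [dist_comm (u := c i') (v := w'), dist_comm (u := w') (v := w)] at *
    omega

theorem exists_dist_le_of_isGeodesicSeq (hg : IsGuessingGeodesics G M g) (hG : G.Connected)
    (L : ℕ) : ∀ c, IsGeodesicSeq G c L →
      ∀ w ∈ g (c 0) (c L), ∃ i ≤ L, G.dist w (c i) ≤ 50 * M * M := by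
  induction L using Nat.strong_induction_on with
  | _ L IH =>
  intro c hc w hw
  by_contra! hfar
  obtain ⟨j, hjL, hmin⟩ : ∃ j ≤ L, ∀ i ≤ L, G.dist w (c j) ≤ G.dist w (c i) := by
    obtain ⟨j, hj, hmin⟩ := Finset.exists_min_image (Finset.range (L + 1))
      (fun i => G.dist w (c i)) ⟨0, by simp⟩
    exact ⟨j, by simpa [Nat.lt_succ_iff] using hj,
      fun i hi => hmin i (by simpa [Nat.lt_succ_iff] using hi)⟩
  set D := G.dist w (c j)
  have hD := hfar j hjL
  set R := D + 50 * M * M + 2 * M + 1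
  set i₁ := j - R
  set i₂ := min (j + R) L
  have hx : ∀ w' ∈ g (c 0) (c i₁), 2 * M < G.dist w w' := fun w' hw' =>
    hg.lt_dist_of_mem_initial hG IH hc hfar (Nat.sub_le j R) hjL (by omega) hw'
  have hy : ∀ w' ∈ g (c L) (c i₂), 2 * M < G.dist w w' := by
    intro w' hw'
    have hw' : w' ∈ g (c (L - 0)) (c (L - (L - i₂))) := by
      rwa [Nat.sub_zero, Nat.sub_sub_self (min_le_right _ _)]
    have hfar' : ∀ i ≤ L, 50 * M * M < G.dist w (c (L - i)) := fun i _ => hfar _ (by omega)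
    have hj' : G.dist w (c j) = G.dist w (c (L - (L - j))) := by rw [Nat.sub_sub_self hjL]
    exact hg.lt_dist_of_mem_initial (c := fun i => c (L - i)) hG IH hc.reverse hfar'
      (i := L - i₂) (j := L - j) (by omega) (Nat.sub_le L j) (by omega) hw'
  obtain ⟨w₁, hw₁, hww₁⟩ := hg.exists_near _ _ (c i₁) w hw
  rcases hw₁ with hw₁ | hw₁
  · exact absurd (hx w₁ hw₁) (by omega)
  obtain ⟨w₂, hw₂, hw₁w₂⟩ := hg.exists_near _ _ (c i₂) w₁ hw₁
  have hww₂ : G.dist w w₂ ≤ 2 * M := by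
    have := hG.dist_triangle (u := w) (v := w₁) (w := w₂)
    omega
  rcases hw₂ with hw₂ | hw₂
  · exact absurd (hy w₂ hw₂) (by omega)
  -- `w₂` lies near the middle segment `c [i₁, i₂]`, which is only logarithmically long in `D`
  set t := Nat.log 2 (4 * (D + M))
  have hlen : i₂ - i₁ ≤ 2 ^ (t + 1) := by
    have : 4 * (D + M) < 2 ^ (t + 1) := Nat.lt_pow_succ_log_self one_lt_two _
    omega
  have hw₂ : w₂ ∈ g ((fun s => c (i₁ + s)) 0) ((fun s => c (i₁ + s)) (i₂ - i₁)) := by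
    simpa [show i₁ + (i₂ - i₁) = i₂ by omega] using hw₂
  obtain ⟨s, hs, hw₂s⟩ := hg.exists_dist_le_of_isDiscretePath hG (t + 1) _ _
    (hc.shift (a := i₁) (n := i₂ - i₁) (by omega)).isDiscretePath hlen w₂ hw₂
  have hw₂s : G.dist w₂ (c (i₁ + s)) ≤ M * (t + 2) := hw₂s
  have hlog : M * (t + 4) < D := mul_log_add_four_lt hD
  have := hmin (i₁ + s) (by omega)
  have := hG.dist_triangle (u := w) (v := w₂) (w := c (i₁ + s))
  have : M * (t + 2) + 2 * M = M * (t + 4) := by ring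
  omega

theorem exists_dist_le_of_mem (hg : IsGuessingGeodesics G M g) (hG : G.Connected) {x y w : V}
    (hw : w ∈ g x y) :
    ∃ u, G.dist w u ≤ 50 * M * M ∧ G.dist x u + G.dist u y = G.dist x y := by
  obtain ⟨c, hc0, hcL, hc⟩ := exists_isGeodesicSeq hG x y
  obtain ⟨i, hi, hd⟩ := hg.exists_dist_le_of_isGeodesicSeq hG _ c hc w (by rwa [hc0, hcL])
  refine ⟨c i, hd, ?_⟩
  have := hc 0 i (Nat.zero_le i) hi
  have := hc i _ hi le_rfl
  rw [hc0, hcL] at *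
  omega

theorem dist_add_dist_le (hg : IsGuessingGeodesics G M g) (hG : G.Connected) (p : V)
    {x y w : V} (hw : w ∈ g x y) :
    G.dist p x + G.dist p y ≤ 2 * G.dist p w + G.dist x y + 2 * (50 * M * M) := by
  obtain ⟨u, hwu, hu⟩ := hg.exists_dist_le_of_mem hG hw
  have := hG.dist_triangle (u := p) (v := w) (w := u)
  have := hG.dist_triangle (u := p) (v := u) (w := x)
  have := hG.dist_triangle (u := p) (v := u) (w := y)
  rw [dist_comm (u := u) (v := x)] at *
  omega

theorem exists_mem_two_mul_dist_add_le (hg : IsGuessingGeodesics G M g) (hG : G.Connected)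
    (p : V) {x y : V} (hxy : (G.induce (g x y)).Connected) : ∃ w ∈ g x y,
      2 * G.dist p w + G.dist x y ≤ G.dist p x + G.dist p y + 4 * (M + 50 * M * M) + 2 := by
  let NearSide (z v : V) : Prop :=
    ∃ u, G.dist v u ≤ M + 50 * M * M ∧ G.dist z u + G.dist u p = G.dist z p
  have hnear : ∀ v ∈ g x y, NearSide x v ∨ NearSide y v := by
    intro v hv
    obtain ⟨v', hv', hvv'⟩ := hg.exists_near x y p v hv
    have key : ∀ z, v' ∈ g z p → NearSide z v := fun z hz => by
      obtain ⟨u, hv'u, hu⟩ := hg.exists_dist_le_of_mem hG hz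
      have := hG.dist_triangle (u := v) (v := v') (w := u)
      exact ⟨u, by omega, hu⟩
    exact hv'.imp (key x) (key y)
  have hself : ∀ z, NearSide z z := fun z => ⟨z, by simp, by simp⟩
  obtain ⟨w, hw, w', hww', ⟨u, hwu, hu⟩, ⟨u', hw'u', hu'⟩⟩ :=
    exists_dist_le_one_of_induce_connected hxy hnear (hg.mem x y).1 (hg.mem x y).2
      (hself x) (hself y)
  refine ⟨w, hw, ?_⟩
  have := hG.dist_triangle (u := p) (v := u) (w := w)
  have := hG.dist_triangle (u := p) (v := w') (w := w)
  have := hG.dist_triangle (u := p) (v := u') (w := w')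
  have := hG.dist_triangle (u := x) (v := w) (w := y)
  have := hG.dist_triangle (u := x) (v := u) (w := w)
  have := hG.dist_triangle (u := w) (v := w') (w := y)
  have := hG.dist_triangle (u := w') (v := u') (w := y)
  have := G.dist_comm (u := p) (v := u)
  have := G.dist_comm (u := p) (v := u')
  have := G.dist_comm (u := p) (v := x)
  have := G.dist_comm (u := p) (v := y)
  have := G.dist_comm (u := u) (v := w)
  have := G.dist_comm (u := w') (v := w)
  have := G.dist_comm (u := u') (v := w')
  have := G.dist_comm (u := u') (v := y)
  omega

theorem dist_add_dist_le_max (hg : IsGuessingGeodesics G M g) (hG : G.Connected)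
    (hconn : ∀ x y, (G.induce (g x y)).Connected) (a b c d : V) :
    G.dist a b + G.dist c d ≤
      max (G.dist a c + G.dist b d) (G.dist a d + G.dist b c) + (6 * (M + 50 * M * M) + 2) := by
  obtain ⟨w, hw, hdw⟩ := hg.exists_mem_two_mul_dist_add_le hG d (hconn a b)
  obtain ⟨w', hw', hww'⟩ := hg.exists_near a b c w hw
  have := hG.dist_triangle (u := d) (v := w) (w := w')
  rcases hw' with hw' | hw'
  · have := hg.dist_add_dist_le hG d hw'
    have := le_max_left (G.dist a c + G.dist b d) (G.dist a d + G.dist b c)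
    rw [dist_comm (u := d) (v := c), dist_comm (u := d) (v := b)] at *
    omega
  · have := hg.dist_add_dist_le hG d hw'
    have := le_max_right (G.dist a c + G.dist b d) (G.dist a d + G.dist b c)
    rw [dist_comm (u := d) (v := c), dist_comm (u := d) (v := a)] at *
    omega

end IsGuessingGeodesics

end GuessingGeodesics

theorem guessing_geodesics_criterion_general (M : ℕ) :
    ∃ δ : ℝ, 0 ≤ δ ∧
      ∀ (V : Type) (G : SimpleGraph V), G.Connected →
        ∀ g : V → V → Set V,
          (∀ x y : V, x ∈ g x y ∧ y ∈ g x y) →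
          (∀ x y : V, (G.induce (g x y)).Connected) →
          (∀ x y : V, G.dist x y ≤ 1 → ∀ a ∈ g x y, ∀ b ∈ g x y, G.dist a b ≤ M) →
          (∀ x y z : V, ∀ w ∈ g x y, ∃ w' ∈ g x z ∪ g y z, G.dist w w' ≤ M) →
          ∀ a b c d : V,
            (G.dist a b : ℝ) + G.dist c d ≤
              max ((G.dist a c : ℝ) + G.dist b d) ((G.dist a d : ℝ) + G.dist b c)
                + 2 * δ := by
  refine ⟨(3 * (M + 50 * M * M) + 1 : ℕ), Nat.cast_nonneg _, ?_⟩
  intro V G hG g hmem hconn hdiam hthin a b c d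
  have h := GuessingGeodesics.IsGuessingGeodesics.dist_add_dist_le_max
    ⟨hmem, hdiam, hthin⟩ hG hconn a b c d
  have h2 : 6 * (M + 50 * M * M) + 2 = 2 * (3 * (M + 50 * M * M) + 1) := by ring
  rw [h2] at h
  exact_mod_cast h

/-- guessing geodesics, Bowditch / Masur–Schleimer: suppose a connected
graph `G` comes with connected subgraphs `g x y` containing `x` and `y` such that
(1) `g x y` has diameter at most `M` whenever `d(x,y) ≤ 1`, and
(2) `g x y` lies in the `M`-neighbourhood of `g x z ∪ g y z` for all `x, y, z`.
Then `G` is `δ`-hyperbolic (expressed via the Gromov four-point condition for the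
path metric), where `δ` depends only on `M`. -/
theorem guessing_geodesics_criterion (M : ℕ) (hM : 0 < M) :
    ∃ δ : ℝ, 0 ≤ δ ∧
      ∀ (V : Type) (G : SimpleGraph V), G.Connected →
        ∀ g : V → V → Set V,
          (∀ x y : V, x ∈ g x y ∧ y ∈ g x y) →
          (∀ x y : V, (G.induce (g x y)).Connected) →
          (∀ x y : V, G.dist x y ≤ 1 → ∀ a ∈ g x y, ∀ b ∈ g x y, G.dist a b ≤ M) →
          (∀ x y z : V, ∀ w ∈ g x y, ∃ w' ∈ g x z ∪ g y z, G.dist w w' ≤ M) →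
          ∀ a b c d : V,
            (G.dist a b : ℝ) + G.dist c d ≤
              max ((G.dist a c : ℝ) + G.dist b d) ((G.dist a d : ℝ) + G.dist b c)
                + 2 * δ :=
  guessing_geodesics_criterion_general M
end

section
/- Let X be a geodesic metric space. If there exists a quasi-isometric embedding of ℤ² (with the ℓ¹ or sup metric) into X, i.e., a map f : ℤ² → X and constants C ≥ 1, D ≥ 0 with (1/C)·|p − q| − D ≤ d(f(p), f(q)) ≤ C·|p − q| + D for all p, q ∈ ℤ², then X is not δ-hyperbolic for any δ ≥ 0. -/
/-- A unit-speed geodesic from `x` to `y`, parametrised on `[0, dist x y]`. -/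
def IsGeodesicParam {X : Type*} [MetricSpace X] (f : ℝ → X) (x y : X) : Prop :=
  f 0 = x ∧ f (dist x y) = y ∧
    ∀ s ∈ Set.Icc (0 : ℝ) (dist x y), ∀ t ∈ Set.Icc (0 : ℝ) (dist x y),
      dist (f s) (f t) = |s - t|

/-- A geodesic metric space: any two points are joined by a geodesic. -/
def IsGeodesicSpace (X : Type*) [MetricSpace X] : Prop :=
  ∀ x y : X, ∃ f : ℝ → X, IsGeodesicParam f x y

/-- Gromov hyperbolicity via `δ`-thin geodesic triangles: each side of a geodesic
triangle lies in the `δ`-neighbourhood of the union of the other two sides. -/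
def IsDeltaHyperbolic (X : Type*) [MetricSpace X] (δ : ℝ) : Prop :=
  ∀ x y z : X, ∀ f g h : ℝ → X,
    IsGeodesicParam f x y → IsGeodesicParam g y z → IsGeodesicParam h x z →
    ∀ t ∈ Set.Icc (0 : ℝ) (dist x z),
      ∃ s : ℝ, (s ∈ Set.Icc (0 : ℝ) (dist x y) ∧ dist (h t) (f s) ≤ δ) ∨
               (s ∈ Set.Icc (0 : ℝ) (dist y z) ∧ dist (h t) (g s) ≤ δ)

/-!
Take `n = 2 ^ K` and the geodesic triangle on `f (0, 0)`, `f (n, n)`, `f (2n, 0)`. Splitting a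
discrete path with steps `≤ L` in half and using thinness of the triangle over the two halves
shows that a geodesic between its endpoints stays within `δ log₂ (length) + L` of it. Hence the
midpoint `m` of the bottom side is `O(K)`-close to the image of a point `(k, 0)` of the bottom
row, and, by thinness, to the image of a point `q` of one of the two diagonal sides. The lower
quasi-isometry bound caps the height of `q`, so `f q`, and with it `m`, is `O(K)`-close to the
corresponding bottom corner. But `m` lies at distance `≥ n / C - D / 2` from both bottom
corners, and `2 ^ K` outgrows every linear function of `K`.
-/

open Set Filter Topology

theorem exists_mul_add_lt_two_pow (a b : ℝ) : ∃ K : ℕ, a * K + b < 2 ^ K := by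
  have hlim : Tendsto (fun K : ℕ => (a * K + b) / 2 ^ K) atTop (𝓝 0) := by
    have := ((tendsto_pow_const_div_const_pow_of_one_lt 1 one_lt_two).const_mul a).add
      ((tendsto_pow_const_div_const_pow_of_one_lt 0 one_lt_two).const_mul b)
    simp only [mul_zero, add_zero, pow_one, pow_zero] at this
    convert this using 2 with K
    ring
  obtain ⟨K, hK⟩ := (hlim.eventually (gt_mem_nhds one_pos)).exists
  exact ⟨K, (div_lt_one (by positivity)).mp hK⟩

namespace IsGeodesicParam

variable {X : Type*} [MetricSpace X] {h : ℝ → X} {x y : X} {t : ℝ}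

theorem dist_left (hh : IsGeodesicParam h x y) (ht : t ∈ Icc 0 (dist x y)) :
    dist (h t) x = t := by
  obtain ⟨h0, -, hd⟩ := hh
  have := hd t ht 0 ⟨le_rfl, dist_nonneg⟩
  rwa [h0, sub_zero, abs_of_nonneg ht.1] at this

theorem dist_right (hh : IsGeodesicParam h x y) (ht : t ∈ Icc 0 (dist x y)) :
    dist (h t) y = dist x y - t := by
  obtain ⟨-, h1, hd⟩ := hh
  have := hd t ht _ ⟨dist_nonneg, le_rfl⟩
  rwa [h1, abs_sub_comm, abs_of_nonneg (sub_nonneg.2 ht.2)] at this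

end IsGeodesicParam

theorem IsDeltaHyperbolic.exists_dist_chain_le {X : Type*} [MetricSpace X] {δ L : ℝ}
    (hX : IsDeltaHyperbolic X δ) (hgeo : IsGeodesicSpace X) (hL : 0 ≤ L) (K : ℕ) :
    ∀ {N : ℕ} {c : ℕ → X} {x y : X} {h : ℝ → X} {t : ℝ}, N ≤ 2 ^ K →
      (∀ i < N, dist (c i) (c (i + 1)) ≤ L) → c 0 = x → c N = y →
      IsGeodesicParam h x y → t ∈ Icc 0 (dist x y) →
      ∃ i ≤ N, dist (h t) (c i) ≤ δ * K + L := by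
  induction K with
  | zero =>
    intro N c x y h t hN hc hx hy hh ht
    have hxy : dist x y ≤ L := by
      subst hx hy
      rcases (show N = 0 ∨ N = 1 by simp at hN; omega) with rfl | rfl
      · simpa using hL
      · simpa using hc 0 one_pos
    refine ⟨0, Nat.zero_le _, ?_⟩
    rw [hx, hh.dist_left ht]
    simpa using ht.2.trans hxy
  | succ k ih =>
    intro N c x y h t hN hc hx hy hh ht
    rw [pow_succ] at hN
    obtain ⟨F, hF⟩ := hgeo x (c (N / 2))
    obtain ⟨G, hG⟩ := hgeo (c (N / 2)) y
    obtain ⟨s, ⟨hs, hts⟩ | ⟨hs, hts⟩⟩ := hX x (c (N / 2)) y F G h hF hG hh t ht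
    · obtain ⟨i, hi, hsi⟩ := ih (by omega) (fun i hi => hc i (by omega)) hx rfl hF hs
      refine ⟨i, by omega, ?_⟩
      calc dist (h t) (c i) ≤ dist (h t) (F s) + dist (F s) (c i) := dist_triangle _ _ _
        _ ≤ δ * ↑(k + 1) + L := by push_cast; linarith
    · obtain ⟨i, hi, hsi⟩ := ih (N := N - N / 2) (c := fun i => c (N / 2 + i)) (by omega)
        (fun i hi => by simpa [add_assoc] using hc (N / 2 + i) (by omega)) (by simp)
        (by rw [← hy, Nat.add_sub_cancel' (Nat.div_le_self N 2)]) hG hs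
      refine ⟨N / 2 + i, by omega, ?_⟩
      calc dist (h t) (c (N / 2 + i)) ≤ dist (h t) (G s) + dist (G s) (c (N / 2 + i)) :=
            dist_triangle _ _ _
        _ ≤ δ * ↑(k + 1) + L := by push_cast; linarith

def IsQuasiIsometricEmbeddingL1 {X : Type*} [MetricSpace X] (f : ℤ × ℤ → X) (C D : ℝ) :
    Prop :=
  ∀ p q : ℤ × ℤ,
    (1 / C) * ((|p.1 - q.1| : ℝ) + (|p.2 - q.2| : ℝ)) - D ≤ dist (f p) (f q) ∧
      dist (f p) (f q) ≤ C * ((|p.1 - q.1| : ℝ) + (|p.2 - q.2| : ℝ)) + D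

namespace IsQuasiIsometricEmbeddingL1

variable {X : Type*} [MetricSpace X] {f : ℤ × ℤ → X} {C D : ℝ}

theorem le_mul_dist_add (hf : IsQuasiIsometricEmbeddingL1 f C D) (hC : 0 < C)
    (p q : ℤ × ℤ) :
    |(p.1 : ℝ) - q.1| + |(p.2 : ℝ) - q.2| ≤ C * (dist (f p) (f q) + D) := by
  have := (hf p q).1
  rw [one_div_mul_eq_div, sub_le_iff_le_add, div_le_iff₀ hC] at this
  linarith

theorem dist_le_of_adjacent (hf : IsQuasiIsometricEmbeddingL1 f C D) (hC : 0 ≤ C)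
    {p q : ℤ × ℤ} (h₁ : |p.1 - q.1| ≤ 1) (h₂ : |p.2 - q.2| ≤ 1) :
    dist (f p) (f q) ≤ 2 * C + D := by
  have h₁' : |(p.1 : ℝ) - q.1| ≤ 1 := by exact_mod_cast h₁
  have h₂' : |(p.2 : ℝ) - q.2| ≤ 1 := by exact_mod_cast h₂
  have := mul_le_mul_of_nonneg_left (add_le_add h₁' h₂') hC
  linarith [(hf p q).2]

theorem dist_le_of_near_row_and_cone (hf : IsQuasiIsometricEmbeddingL1 f C D) (hC : 0 < C)
    {m : X} {R : ℝ} {k e : ℤ} {q : ℤ × ℤ} (hq : |q.1 - e| ≤ q.2)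
    (hmk : dist m (f (k, 0)) ≤ R) (hmq : dist m (f q) ≤ R) :
    dist m (f (e, 0)) ≤ (1 + 4 * C ^ 2) * R + (2 * C ^ 2 + 1) * D := by
  have hq' : |(q.1 : ℝ) - e| ≤ q.2 := by exact_mod_cast hq
  have hq₂ : (0 : ℝ) ≤ q.2 := (abs_nonneg _).trans hq'
  have hheight : (q.2 : ℝ) ≤ C * (2 * R + D) := by
    have hlow := hf.le_mul_dist_add hC (k, 0) q
    simp only [Int.cast_zero, zero_sub, abs_neg, abs_of_nonneg hq₂] at hlow
    have hkq : dist (f (k, 0)) (f q) ≤ 2 * R := (dist_triangle_left _ _ m).trans (by linarith)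
    have := mul_le_mul_of_nonneg_left (add_le_add_right hkq D) hC.le
    linarith [abs_nonneg ((k : ℝ) - q.1)]
  have hqe : dist (f q) (f (e, 0)) ≤ 2 * C * q.2 + D := by
    have hup := (hf q (e, 0)).2
    simp only [Int.cast_zero, sub_zero, abs_of_nonneg hq₂] at hup
    have := mul_le_mul_of_nonneg_left hq' hC.le
    linarith
  have := mul_le_mul_of_nonneg_left hheight (by positivity : (0 : ℝ) ≤ 2 * C)
  calc dist m (f (e, 0)) ≤ dist m (f q) + dist (f q) (f (e, 0)) := dist_triangle _ _ _
    _ ≤ (1 + 4 * C ^ 2) * R + (2 * C ^ 2 + 1) * D := by linarith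

end IsQuasiIsometricEmbeddingL1

theorem IsDeltaHyperbolic.dist_le_of_quasiflat {X : Type*} [MetricSpace X] {δ C D : ℝ}
    {f : ℤ × ℤ → X} (hX : IsDeltaHyperbolic X δ) (hgeo : IsGeodesicSpace X)
    (hf : IsQuasiIsometricEmbeddingL1 f C D) (hC : 0 < C) (hD : 0 ≤ D) {n K : ℕ}
    (hn : n ≤ 2 ^ K) :
    dist (f (0, 0)) (f (2 * n, 0)) ≤
      2 * ((1 + 4 * C ^ 2) * (δ * (K + 1) + (2 * C + D)) + (2 * C ^ 2 + 1) * D) := by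
  have hL : 0 ≤ 2 * C + D := by positivity
  obtain ⟨h, hh⟩ := hgeo (f (0, 0)) (f (2 * n, 0))
  obtain ⟨F, hF⟩ := hgeo (f (0, 0)) (f (n, n))
  obtain ⟨G, hG⟩ := hgeo (f (n, n)) (f (2 * n, 0))
  set d := dist (f (0, 0)) (f (2 * n, 0))
  have hmid : d / 2 ∈ Icc 0 d := ⟨by positivity,
    by linarith [dist_nonneg (x := f (0, 0)) (y := f (2 * n, 0))]⟩
  obtain ⟨k, -, hk⟩ := hX.exists_dist_chain_le hgeo hL (K + 1) (N := 2 * n)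
    (c := fun i => f (i, 0)) (by rw [pow_succ]; omega)
    (fun i _ => hf.dist_le_of_adjacent hC.le (by simp) (by simp)) (by simp) (by simp) hh hmid
  push_cast at hk
  obtain ⟨s, ⟨hs, hms⟩ | ⟨hs, hms⟩⟩ := hX _ _ _ F G h hF hG hh _ hmid
  · obtain ⟨j, -, hj⟩ := hX.exists_dist_chain_le hgeo hL K (c := fun i => f (i, i)) hn
      (fun i _ => hf.dist_le_of_adjacent hC.le (by simp) (by simp)) (by simp) rfl hF hs
    have hm := hf.dist_le_of_near_row_and_cone hC (e := 0) (q := (j, j)) (by simp) hk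
      ((dist_triangle _ (F s) _).trans (by linarith))
    rw [hh.dist_left hmid] at hm
    linarith
  · obtain ⟨j, hjn, hj⟩ := hX.exists_dist_chain_le hgeo hL K (c := fun i => f (n + i, n - i))
      hn (fun i _ => hf.dist_le_of_adjacent hC.le (by simp) (by simp)) (by simp) (by ring_nf)
      hG hs
    have hm := hf.dist_le_of_near_row_and_cone hC (e := 2 * n) (q := (n + j, n - j))
      (by rw [abs_le]; omega) hk ((dist_triangle _ (G s) _).trans (by linarith))
    rw [hh.dist_right hmid] at hm
    linarith

/-- a geodesic metric space admitting a quasi-isometric embedding of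
`ℤ²` (with the `ℓ¹` metric) is not `δ`-hyperbolic for any `δ ≥ 0`. -/
theorem no_hyperbolicity_with_quasiflat
    {X : Type*} [MetricSpace X] (hgeo : IsGeodesicSpace X)
    (f : ℤ × ℤ → X) (C D : ℝ) (hC : 1 ≤ C) (hD : 0 ≤ D)
    (hqi : ∀ p q : ℤ × ℤ,
      (1 / C) * ((|p.1 - q.1| : ℝ) + (|p.2 - q.2| : ℝ)) - D ≤ dist (f p) (f q) ∧
      dist (f p) (f q) ≤ C * ((|p.1 - q.1| : ℝ) + (|p.2 - q.2| : ℝ)) + D) :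
    ∀ δ : ℝ, 0 ≤ δ → ¬ IsDeltaHyperbolic X δ := by
  intro δ _ hX
  have hC₀ : 0 < C := by linarith
  obtain ⟨K, hK⟩ := exists_mul_add_lt_two_pow (C * (1 + 4 * C ^ 2) * δ)
    (C * ((1 + 4 * C ^ 2) * (δ + 2 * C + D) + (2 * C ^ 2 + 3 / 2) * D))
  obtain ⟨n, hn⟩ : ∃ n : ℕ, n = 2 ^ K := ⟨_, rfl⟩
  have hupper := hX.dist_le_of_quasiflat hgeo hqi hC₀ hD hn.le
  have hlower := IsQuasiIsometricEmbeddingL1.le_mul_dist_add hqi hC₀ (0, 0) (2 * n, 0)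
  simp only [Int.cast_zero, Int.cast_mul, Int.cast_ofNat, Int.cast_natCast, zero_sub, abs_neg,
    sub_self, abs_zero, add_zero, abs_of_nonneg (by positivity : (0 : ℝ) ≤ 2 * n)] at hlower
  have := mul_le_mul_of_nonneg_left hupper hC₀.le
  have hn' : (n : ℝ) = 2 ^ K := by exact_mod_cast hn
  linarith
end
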